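/- Let H : X → X be a homeomorphism of a compact metric space. Suppose that for any nonempty open sets U, V ⊂ X there is l > 0 such that H^l(U) ∩ U ≠ ∅ and H^l(U) ∩ V ≠ ∅. If additionally H is topologically transitive, then H is topologically weakly mixing, i.e., H × H is topologically transitive. -/

import Mathlib

/-- Topological transitivity: for all nonempty open `U, V` there is `n > 0`
with `g^[n](U) ∩ V ≠ ∅`. -/
def IsTransitiveMap {X : Type*} [TopologicalSpace X] (g : X → X) : Prop :=
  ∀ U V : Set X, IsOpen U → IsOpen V → U.Nonempty → V.Nonempty →
    ∃ n : ℕ, 0 < n ∧ (g^[n] '' U ∩ V).Nonempty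

/-- Topological weak mixing: the product system `g × g` is topologically transitive. -/
def IsWeaklyMixing {X : Type*} [TopologicalSpace X] (g : X → X) : Prop :=
  ∀ U₁ V₁ U₂ V₂ : Set X, IsOpen U₁ → IsOpen V₁ → IsOpen U₂ → IsOpen V₂ →
    U₁.Nonempty → V₁.Nonempty → U₂.Nonempty → V₂.Nonempty →
    ∃ n : ℕ, 0 < n ∧ (g^[n] '' U₁ ∩ V₁).Nonempty ∧ (g^[n] '' U₂ ∩ V₂).Nonempty

/-!
Banks' criterion. Given `U, V₁, V₂`, transitivity gives `m` with `U' = U ∩ H⁻ᵐ V₁ ≠ ∅`, and the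
hypothesis applied to `U'` and `H⁻ᵐ V₂` gives `l` such that `Hˡ U'` meets both `U' ⊆ H⁻ᵐ V₁` and
`H⁻ᵐ V₂`; hence `Hᵐ⁺ˡ U` meets both `V₁` and `V₂`. For the four sets of weak mixing, pick `m`
with `U₃ = U₂ ∩ H⁻ᵐ U₁ ≠ ∅` and a common time `n` at which `Hⁿ U₃` meets `H⁻ᵐ V₁` and `V₂`;
as `Hᵐ U₃ ⊆ U₁`, the same `n` works for both pairs `(U₁, V₁)` and `(U₂, V₂)`.
-/

theorem Function.iterate_add_image_inter_nonempty {α : Type*} {g : α → α} {s v : Set α}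
    {m n : ℕ} (h : (g^[n] '' s ∩ g^[m] ⁻¹' v).Nonempty) : (g^[m + n] '' s ∩ v).Nonempty := by
  rwa [Function.iterate_add, Set.image_comp, Set.image_inter_nonempty_iff]

section

variable {X : Type*} [TopologicalSpace X] {g : X → X}

theorem Continuous.isOpen_inter_iterate_preimage (hg : Continuous g) {U V : Set X}
    (hU : IsOpen U) (hV : IsOpen V) (m : ℕ) : IsOpen (U ∩ g^[m] ⁻¹' V) :=
  hU.inter (hV.preimage (hg.iterate m))

theorem IsTransitiveMap.exists_iterate_image_inter_nonempty_pair (htrans : IsTransitiveMap g)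
    (hg : Continuous g) (hsurj : Function.Surjective g)
    (hbanks : ∀ U V : Set X, IsOpen U → IsOpen V → U.Nonempty → V.Nonempty →
      ∃ l : ℕ, 0 < l ∧ (g^[l] '' U ∩ U).Nonempty ∧ (g^[l] '' U ∩ V).Nonempty)
    {U V₁ V₂ : Set X} (hU : IsOpen U) (hV₁ : IsOpen V₁) (hV₂ : IsOpen V₂)
    (hUne : U.Nonempty) (hV₁ne : V₁.Nonempty) (hV₂ne : V₂.Nonempty) :
    ∃ n : ℕ, 0 < n ∧ (g^[n] '' U ∩ V₁).Nonempty ∧ (g^[n] '' U ∩ V₂).Nonempty := by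
  obtain ⟨m, -, hmeet⟩ := htrans U V₁ hU hV₁ hUne hV₁ne
  rw [Set.image_inter_nonempty_iff] at hmeet
  obtain ⟨l, hl, hreturn, hhit⟩ :=
    hbanks (U ∩ g^[m] ⁻¹' V₁) (g^[m] ⁻¹' V₂) (hg.isOpen_inter_iterate_preimage hU hV₁ m)
      (hV₂.preimage (hg.iterate m)) hmeet (hV₂ne.preimage (hsurj.iterate m))
  have hUsub : U ∩ g^[m] ⁻¹' V₁ ⊆ U := Set.inter_subset_left
  have hfirst : (g^[l] '' (U ∩ g^[m] ⁻¹' V₁) ∩ g^[m] ⁻¹' V₁).Nonempty :=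
    hreturn.mono (Set.inter_subset_inter_right _ Set.inter_subset_right)
  refine ⟨m + l, by omega, ?_, ?_⟩
  · exact (Function.iterate_add_image_inter_nonempty hfirst).mono
      (Set.inter_subset_inter_left _ (Set.image_mono hUsub))
  · exact (Function.iterate_add_image_inter_nonempty hhit).mono
      (Set.inter_subset_inter_left _ (Set.image_mono hUsub))

theorem IsTransitiveMap.isWeaklyMixing (htrans : IsTransitiveMap g)
    (hg : Continuous g) (hsurj : Function.Surjective g)
    (hbanks : ∀ U V : Set X, IsOpen U → IsOpen V → U.Nonempty → V.Nonempty →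
      ∃ l : ℕ, 0 < l ∧ (g^[l] '' U ∩ U).Nonempty ∧ (g^[l] '' U ∩ V).Nonempty) :
    IsWeaklyMixing g := by
  intro U₁ V₁ U₂ V₂ hU₁ hV₁ hU₂ hV₂ hU₁ne hV₁ne hU₂ne hV₂ne
  obtain ⟨m, -, hmeet⟩ := htrans U₂ U₁ hU₂ hU₁ hU₂ne hU₁ne
  rw [Set.image_inter_nonempty_iff] at hmeet
  obtain ⟨n, hn, hfirst, hsecond⟩ :=
    htrans.exists_iterate_image_inter_nonempty_pair hg hsurj hbanks
      (hg.isOpen_inter_iterate_preimage hU₂ hU₁ m) (hV₁.preimage (hg.iterate m)) hV₂ hmeet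
      (hV₁ne.preimage (hsurj.iterate m)) hV₂ne
  refine ⟨n, hn, ?_, hsecond.mono ?_⟩
  · have hU₃ : g^[m] '' (U₂ ∩ g^[m] ⁻¹' U₁) ⊆ U₁ := Set.image_subset_iff.2 Set.inter_subset_right
    have := Function.iterate_add_image_inter_nonempty hfirst
    rw [add_comm, Function.iterate_add, Set.image_comp] at this
    exact this.mono (Set.inter_subset_inter_left _ (Set.image_mono hU₃))
  · exact Set.inter_subset_inter_left _ (Set.image_mono Set.inter_subset_left)

end

theorem pseudo_suspension_stmt19_general
    {X : Type*} [MetricSpace X]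
    (H : X → X) (hc : Continuous H) (hbij : Function.Bijective H)
    (hbanks : ∀ U V : Set X, IsOpen U → IsOpen V → U.Nonempty → V.Nonempty →
      ∃ l : ℕ, 0 < l ∧ (H^[l] '' U ∩ U).Nonempty ∧ (H^[l] '' U ∩ V).Nonempty)
    (htrans : IsTransitiveMap H) :
    IsWeaklyMixing H :=
  htrans.isWeaklyMixing hc hbij.surjective hbanks

/-- Banks' criterion, as used in Theorem 5.6: If a homeomorphism `H` of a
compact metric space is topologically transitive and for any nonempty open `U, V` there
is `l > 0` with `H^l(U) ∩ U ≠ ∅` and `H^l(U) ∩ V ≠ ∅`, then `H` is topologically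
weakly mixing. -/
theorem pseudo_suspension_stmt19
    {X : Type*} [MetricSpace X] [CompactSpace X]
    (H : X → X) (hc : Continuous H) (hbij : Function.Bijective H)
    (hbanks : ∀ U V : Set X, IsOpen U → IsOpen V → U.Nonempty → V.Nonempty →
      ∃ l : ℕ, 0 < l ∧ (H^[l] '' U ∩ U).Nonempty ∧ (H^[l] '' U ∩ V).Nonempty)
    (htrans : IsTransitiveMap H) :
    IsWeaklyMixing H :=
  pseudo_suspension_stmt19_general H hc hbij hbanks htrans
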